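/- The SSPERK(10,4) method satisfies the SSP conditions at parameter r = 6: with K = [[A, 0], [bᵀ, 0]] ∈ ℝ^{11×11}, every entry of K(I + 6K)^{-1} is nonnegative and every component of 6K(I + 6K)^{-1}e is at most 1. Hence the SSP coefficient of SSPERK(10,4) is at least 6. -/

import Mathlib

/-!
Since `K` is strictly lower triangular, `I + 6K` is unipotent, so `P = K(I + 6K)⁻¹` is the unique
solution of `P(I + 6K) = K`. For SSPERK(10,4), `P` holds the coefficients of the method's
low-storage Shu–Osher form, in which each stage is built from `uₙ` and the previous stage only,
and the output from `uₙ` and stages 5 and 10. So `P` is very sparse and `P(I + 6K) = K` can be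
checked row by row; both SSP conditions are then read off `P`: its entries are nonnegative and its
row sums are at most `1/6`.
-/

open Matrix

/-- The matrix `K = [[A, 0], [bᵀ, 0]] ∈ ℝ^{(s+1)×(s+1)}`. -/
noncomputable def mkK {s : ℕ} (A : Matrix (Fin s) (Fin s) ℝ) (b : Fin s → ℝ) :
    Matrix (Fin (s + 1)) (Fin (s + 1)) ℝ :=
  Matrix.of fun i j =>
    if hj : (j : ℕ) < s then
      if hi : (i : ℕ) < s then A ⟨i, hi⟩ ⟨j, hj⟩ else b ⟨j, hj⟩
    else 0

/-- Coefficient matrix of the optimal SSPERK(10,4) method (zero-indexed):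
for `j < i`, the entry is `1/6` if `i ≤ 4` or `j ≥ 5`, and `1/15` otherwise. -/
noncomputable def A104 : Matrix (Fin 10) (Fin 10) ℝ :=
  Matrix.of fun i j =>
    if (j : ℕ) < (i : ℕ) then
      if (i : ℕ) ≤ 4 ∨ 5 ≤ (j : ℕ) then 1/6 else 1/15
    else 0

/-- Weights of the optimal SSPERK(10,4) method. -/
noncomputable def b104 : Fin 10 → ℝ := fun _ => 1/10

namespace Matrix

def IsStrictlyLowerTriangular {n R : Type*} [LE n] [Zero R] (K : Matrix n n R) : Prop :=
  ∀ ⦃i j⦄, i ≤ j → K i j = 0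

variable {n R : Type*} [Fintype n] [DecidableEq n] [LinearOrder n] [CommRing R]

theorem IsStrictlyLowerTriangular.det_one_add_smul {K : Matrix n n R}
    (hK : K.IsStrictlyLowerTriangular) (r : R) : (1 + r • K).det = 1 := by
  rw [det_of_isLowerTriangular]
  · simp [hK le_rfl]
  · intro i j hij
    have hij : i < j := hij
    simp [one_apply_ne hij.ne, hK hij.le]

theorem IsStrictlyLowerTriangular.mul_inv_one_add_smul_eq {K P : Matrix n n R}
    (hK : K.IsStrictlyLowerTriangular) {r : R} (h : P * (1 + r • K) = K) :
    K * (1 + r • K)⁻¹ = P :=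
  calc K * (1 + r • K)⁻¹ = P * (1 + r • K) * (1 + r • K)⁻¹ := by rw [h]
    _ = P := mul_nonsing_inv_cancel_right _ _ (by rw [hK.det_one_add_smul]; exact isUnit_one)

end Matrix

theorem mkK_isStrictlyLowerTriangular {s : ℕ} {A : Matrix (Fin s) (Fin s) ℝ}
    (hA : A.IsStrictlyLowerTriangular) (b : Fin s → ℝ) : (mkK A b).IsStrictlyLowerTriangular := by
  intro i j hij
  simp only [mkK, of_apply]
  split_ifs with hj hi
  · exact hA (Fin.mk_le_mk.2 hij)
  · exact absurd ((Fin.le_def.1 hij).trans_lt hj) hi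
  · rfl

theorem A104_isStrictlyLowerTriangular : A104.IsStrictlyLowerTriangular := by
  intro i j hij
  simp only [A104, of_apply, if_neg (not_lt.2 (Fin.le_def.1 hij))]

theorem mkK_A104_b104_apply (i j : Fin 11) :
    mkK A104 b104 i j =
      if (j : ℕ) < i then
        if (i : ℕ) = 10 then 1/10 else if (i : ℕ) ≤ 4 ∨ 5 ≤ (j : ℕ) then 1/6 else 1/15
      else 0 := by
  simp only [mkK, A104, b104, of_apply]
  split_ifs <;> first | rfl | omega

noncomputable def P104 : Matrix (Fin 11) (Fin 11) ℝ :=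
  Matrix.of fun i j =>
    if (i : ℕ) = j + 1 then
      if (i : ℕ) = 5 then 1/15 else if (i : ℕ) = 10 then 1/10 else 1/6
    else if (i : ℕ) = 10 ∧ (j : ℕ) = 4 then 3/50 else 0

theorem P104_mul_one_add_smul : P104 * (1 + (6 : ℝ) • mkK A104 b104) = mkK A104 b104 := by
  ext i j
  fin_cases i <;>
    simp only [mul_apply, Fin.sum_univ_succ, Fin.sum_univ_zero, P104, of_apply, Fin.val_succ,
      Fin.isValue, Nat.reduceAdd, Nat.reduceEqDiff, ↓reduceIte, and_false, false_and, and_true,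
      zero_mul, zero_add, add_zero, Fin.coe_ofNat_eq_mod, Nat.zero_mod] <;>
    fin_cases j <;> norm_num [mkK_A104_b104_apply, one_apply, Fin.ext_iff]

theorem P104_nonneg (i j : Fin 11) : 0 ≤ P104 i j := by
  simp only [P104, of_apply]
  split_ifs <;> norm_num

theorem P104_row_sum_le (i : Fin 11) : 6 * ∑ j, P104 i j ≤ 1 := by
  fin_cases i <;> norm_num [Fin.sum_univ_succ, P104]

/-- SSPERK(10,4) satisfies the SSP conditions at `r = 6`: with
`K = [[A, 0], [bᵀ, 0]] ∈ ℝ^{11×11}`, `K(I + 6K)⁻¹ ≥ 0` entrywise and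
`6K(I + 6K)⁻¹ e ≤ e` componentwise; hence its SSP coefficient is at least `6`. -/
theorem ssperk104_ssp_conditions :
    (∀ i j : Fin 11, 0 ≤ (mkK A104 b104 * (1 + (6 : ℝ) • mkK A104 b104)⁻¹) i j) ∧
    (∀ i : Fin 11,
      ((6 : ℝ) • (mkK A104 b104 * (1 + (6 : ℝ) • mkK A104 b104)⁻¹)).mulVec
        (fun _ => 1) i ≤ 1) := by
  have hP : mkK A104 b104 * (1 + (6 : ℝ) • mkK A104 b104)⁻¹ = P104 :=
    (mkK_isStrictlyLowerTriangular A104_isStrictlyLowerTriangular b104).mul_inv_one_add_smul_eq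
      P104_mul_one_add_smul
  rw [hP]
  refine ⟨P104_nonneg, fun i => ?_⟩
  simpa [mulVec, dotProduct, Finset.mul_sum] using P104_row_sum_le i
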